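/- arXiv:2010.14312 — 3 statements merged into one kernel-verified Lean document; each statement's English description precedes it below -/
import Mathlib

section
/- The chromatic symmetric function of S, the twin graph of the 4-cycle, satisfies X_S = 4 e_{(3,2)} + 6 e_{(4,1)} + 50 e_{(5)}. -/
open scoped BigOperators

/-- The chromatic symmetric function `X_G` of a finite simple graph `G`, as a formal
power series in countably many commuting variables `x_0, x_1, x_2, …` (the colors are
the natural numbers): the coefficient of the monomial `∏ i, x_i ^ (d i)` is the number
of proper colorings `κ : V → ℕ` whose color fibers have the sizes prescribed by `d`. -/
noncomputable def csf {V : Type} [Fintype V] (G : SimpleGraph V) : MvPowerSeries ℕ ℚ :=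
  fun d => (Nat.card {κ : V → ℕ // (∀ a b : V, G.Adj a b → κ a ≠ κ b) ∧
      ∀ i : ℕ, Nat.card {v : V // κ v = i} = d i} : ℚ)

/- The elementary symmetric function `e_k`, as a formal power series:
the sum of all squarefree monomials of total degree `k`. -/
open Classical in
noncomputable def esym (k : ℕ) : MvPowerSeries ℕ ℚ :=
  fun d => if (∀ i, d i ≤ 1) ∧ (d.sum fun _ e => e) = k then 1 else 0

/-- The cycle `C_n` on the `n` vertices `0, 1, …, n-1`, with edges `{i, i+1 mod n}`
(for `n = 2` this is the single edge `K_2`). -/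
def cycle (n : ℕ) : SimpleGraph (Fin n) :=
  SimpleGraph.fromRel (fun i j => ((i : ℕ) + 1) % n = (j : ℕ))

/-- The twin graph `G_v`: a new vertex `v'` (here `none`) is added to `G`, adjacent
to `v` and to exactly the neighbors of `v`. -/
def twin {V : Type} (G : SimpleGraph V) (v : V) : SimpleGraph (Option V) :=
  SimpleGraph.fromRel (fun a b =>
    match a, b with
    | some a', some b' => G.Adj a' b'
    | some a', none => a' = v ∨ G.Adj a' v
    | none, some b' => b' = v ∨ G.Adj b' v
    | none, none => False)


open Finset MvPowerSeries

/-!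
The coefficient of `x^d` in `X_S` counts proper colourings whose colour classes have sizes `d`.
It vanishes unless `deg d = 5` and every `d i ≤ 2`, since `S` has no independent set of size
three. Otherwise relabelling colours along a value-preserving bijection between supports shows
that it only depends on the numbers `n₁, n₂` of exponents equal to `1` and `2`. The types
`(2,2,1)` and `(2,1,1,1)` are counted by brute force (`4` and `18` colourings), and for
`(1,1,1,1,1)` every bijection onto the colours is proper (`5! = 120`).

On the other side, a factorisation `x^d = x^p x^q` into squarefree monomials of degrees `a` and
`b` is determined by the set of exponent-one variables that go into `x^q`, which must be joined
by all exponent-two variables; so the coefficient of `e_a e_b` is `C(n₁, b - n₂)` (or `0` if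
`n₂ > b`), and `4 C(n₁, 2 - n₂) + 6 C(n₁, 1 - n₂) + 50 [n₂ = 0]` is `4, 18, 120` in the three
cases.
-/

namespace SimpleGraph

variable {V : Type} [Fintype V] (G : SimpleGraph V)

noncomputable def numColorings {ι : Type} [DecidableEq ι] (c : ι → ℕ) : ℕ :=
  Nat.card {κ : V → ι // (∀ a b, G.Adj a b → κ a ≠ κ b) ∧ ∀ j, #{v | κ v = j} = c j}

variable {ι ι' : Type} [DecidableEq ι] [DecidableEq ι']

theorem numColorings_comp_equiv (e : ι' ≃ ι) (c : ι → ℕ) :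
    G.numColorings (c ∘ e) = G.numColorings c := by
  refine Nat.card_congr (((Equiv.refl V).arrowCongr e).subtypeEquiv fun κ => ?_)
  simp only [Equiv.arrowCongr_apply, Equiv.refl_symm, Equiv.refl_apply, Function.comp_apply,
    ne_eq, EmbeddingLike.apply_eq_iff_eq, e.forall_congr_left, ← Equiv.eq_symm_apply,
    Equiv.apply_symm_apply]

theorem numColorings_subtype (p : ι → Prop) [DecidablePred p] (c : ι → ℕ)
    (hc : ∀ j, ¬p j → c j = 0) :
    G.numColorings (fun j : {j // p j} => c j) = G.numColorings c := by
  have hp (κ : V → ι) (hκ : ∀ j, #{v | κ v = j} = c j) (v : V) : p (κ v) := by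
    by_contra h
    have := hκ (κ v)
    rw [hc _ h, card_eq_zero, filter_eq_empty_iff] at this
    exact this (mem_univ v) rfl
  refine Nat.card_congr
    { toFun := fun κ => ⟨fun v => κ.1 v, fun a b hab h => κ.2.1 a b hab (Subtype.ext h),
        fun j => ?_⟩
      invFun := fun κ => ⟨fun v => ⟨κ.1 v, hp κ.1 κ.2.2 v⟩,
        fun a b hab h => κ.2.1 a b hab (congrArg Subtype.val h), fun j => ?_⟩
      left_inv := fun κ => rfl
      right_inv := fun κ => rfl }
  · by_cases hj : p j
    · simpa only [Subtype.ext_iff] using κ.2.2 ⟨j, hj⟩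
    · rw [hc j hj, card_eq_zero, filter_eq_empty_iff]
      exact fun v _ h => hj (h ▸ (κ.1 v).2)
  · simpa only [Subtype.ext_iff] using κ.2.2 j

theorem numColorings_const_one [Fintype ι] (h : Fintype.card ι = Fintype.card V) :
    G.numColorings (fun _ : ι => 1) = (Fintype.card V).factorial := by
  classical
  have hbij (κ : V → ι) :
      ((∀ a b, G.Adj a b → κ a ≠ κ b) ∧ ∀ j, #{v | κ v = j} = 1) ↔ Function.Bijective κ := by
    simp only [card_eq_one_iff_existsUnique, mem_filter, mem_univ, true_and,
      ← Function.bijective_iff_existsUnique]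
    exact and_iff_right_of_imp fun hκ a b hab => hκ.injective.ne (G.ne_of_adj hab)
  rw [numColorings, Nat.card_congr ((Equiv.subtypeEquivRight hbij).trans Equiv.bijectiveEquiv),
    Nat.card_eq_fintype_card, Fintype.card_equiv (Fintype.equivOfCardEq h.symm)]

end SimpleGraph

theorem csf_apply {V : Type} [Fintype V] (G : SimpleGraph V) (d : ℕ →₀ ℕ) :
    csf G d = G.numColorings d := by
  simp only [csf, SimpleGraph.numColorings, Nat.card_eq_fintype_card, Fintype.card_subtype]

theorem csf_apply_eq_zero_of_degree_ne {V : Type} [Fintype V] (G : SimpleGraph V)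
    {d : ℕ →₀ ℕ} (hd : d.degree ≠ Fintype.card V) : csf G d = 0 := by
  rw [csf_apply, Nat.cast_eq_zero]
  refine Nat.card_eq_zero.2 (.inl ⟨fun ⟨κ, _, hfib⟩ => hd ?_⟩)
  have hκ (v : V) : κ v ∈ d.support := by
    rw [Finsupp.mem_support_iff, ← hfib, ← pos_iff_ne_zero, card_pos]
    exact ⟨v, mem_filter.2 ⟨mem_univ v, rfl⟩⟩
  rw [Finsupp.degree_apply, ← card_univ, card_eq_sum_card_fiberwise fun v _ => hκ v]
  simp only [hfib]

theorem csf_apply_eq_zero_of_indepSetFree {V : Type} [Fintype V]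
    {G : SimpleGraph V} {k : ℕ} (hG : G.IndepSetFree k) {d : ℕ →₀ ℕ} {i : ℕ} (hk : k ≤ d i) :
    csf G d = 0 := by
  rw [csf_apply, Nat.cast_eq_zero]
  refine Nat.card_eq_zero.2 (.inl ⟨fun ⟨κ, hκ, hfib⟩ => ?_⟩)
  obtain ⟨t, ht, htk⟩ := exists_subset_card_eq ((hfib i).symm ▸ hk : k ≤ #{v | κ v = i})
  refine hG t ⟨fun a ha b hb _ hab => hκ a b hab ?_, htk⟩
  rw [(mem_filter.1 (ht ha)).2, (mem_filter.1 (ht hb)).2]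

theorem csf_apply_eq_numColorings {V : Type} [Fintype V] (G : SimpleGraph V) (d : ℕ →₀ ℕ)
    {ι : Type} [DecidableEq ι] (c : ι → ℕ) (e : ι ≃ d.support) (he : ∀ j, d (e j) = c j) :
    csf G d = G.numColorings c := by
  rw [csf_apply, ← G.numColorings_subtype (· ∈ d.support) d fun i => Finsupp.notMem_support_iff.1,
    ← G.numColorings_comp_equiv e]
  exact congrArg (fun c => (G.numColorings c : ℚ)) (funext he)

theorem Equiv.exists_apply_eq_of_card_fiber_eq {α β γ : Type*} [Finite α] [Finite β]
    {f : α → γ} {g : β → γ} (h : ∀ c, Nat.card {a // f a = c} = Nat.card {b // g b = c}) :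
    ∃ e : α ≃ β, ∀ a, g (e a) = f a :=
  ⟨Equiv.ofFiberEquiv fun c => (Finite.card_eq.1 (h c)).some, Equiv.ofFiberEquiv_map _⟩

theorem Finsupp.natCard_subtype_support_apply_eq (d : ℕ →₀ ℕ) (v : ℕ) :
    Nat.card {i : d.support // d i = v} = #{i ∈ d.support | d i = v} := by
  rw [Nat.card_eq_fintype_card, Fintype.card_subtype, univ_eq_attach,
    filter_attach (fun i => d i = v), card_map, card_attach]

theorem csf_apply_eq_numColorings_of_le_two {V : Type} [Fintype V] (G : SimpleGraph V)
    {d : ℕ →₀ ℕ} (hd : ∀ i, d i ≤ 2) {ι : Type} [Fintype ι] [DecidableEq ι] (c : ι → ℕ)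
    (hc : ∀ j, c j = 1 ∨ c j = 2) (h₁ : Fintype.card {j // c j = 1} = #{i ∈ d.support | d i = 1})
    (h₂ : Fintype.card {j // c j = 2} = #{i ∈ d.support | d i = 2}) :
    csf G d = G.numColorings c := by
  suffices h : ∀ v, Nat.card {j // c j = v} = Nat.card {i : d.support // d i = v} by
    obtain ⟨e, he⟩ := Equiv.exists_apply_eq_of_card_fiber_eq h
    exact csf_apply_eq_numColorings G d c e he
  intro v
  rw [Finsupp.natCard_subtype_support_apply_eq, Nat.card_eq_fintype_card]
  by_cases hv : v = 1 ∨ v = 2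
  · rcases hv with rfl | rfl
    exacts [h₁, h₂]
  · rw [Fintype.card_eq_zero_iff.2 ⟨fun ⟨j, hj⟩ => hv (hj ▸ hc j)⟩, eq_comm, card_eq_zero,
      filter_eq_empty_iff]
    intro i hi hiv
    have := Finsupp.mem_support_iff.1 hi
    have := hd i
    omega

theorem Finsupp.degree_eq_of_le_two {d : ℕ →₀ ℕ} (hd : ∀ i, d i ≤ 2) :
    d.degree = #{i ∈ d.support | d i = 1} + 2 * #{i ∈ d.support | d i = 2} := by
  have h₂ : {i ∈ d.support | ¬d i = 1} = {i ∈ d.support | d i = 2} :=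
    filter_congr fun i hi => by
      have := Finsupp.mem_support_iff.1 hi
      have := hd i
      omega
  rw [Finsupp.degree_apply, ← Finset.sum_filter_add_sum_filter_not d.support (fun i => d i = 1), h₂,
    sum_const_nat fun i hi => (mem_filter.1 hi).2, sum_const_nat fun i hi => (mem_filter.1 hi).2,
    mul_one, mul_comm]

theorem esym_zero : esym 0 = 1 := by
  ext d
  rw [coeff_one, coeff_apply, esym]
  by_cases hd : d = 0
  · simp [hd]
  · simp only [hd, if_false, ite_eq_right_iff, one_ne_zero, imp_false, not_and]
    exact fun _ h => hd ((Finsupp.degree_eq_zero_iff d).1 h)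

open Classical in
theorem coeff_esym_mul_esym (a b : ℕ) (d : ℕ →₀ ℕ) :
    coeff d (esym a * esym b) = #{p ∈ antidiagonal d |
      ((∀ i, p.1 i ≤ 1) ∧ p.1.degree = a) ∧ (∀ i, p.2 i ≤ 1) ∧ p.2.degree = b} := by
  rw [coeff_mul, natCast_card_filter]
  refine Finset.sum_congr rfl fun p _ => ?_
  rw [coeff_apply, coeff_apply, esym, esym, ite_zero_mul_ite_zero, mul_one]
  rfl

open Classical in
theorem coeff_esym_mul_esym_eq_zero {a b : ℕ} {d : ℕ →₀ ℕ}
    (h : ¬((∀ i, d i ≤ 2) ∧ d.degree = a + b)) : coeff d (esym a * esym b) = 0 := by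
  rw [coeff_esym_mul_esym, Nat.cast_eq_zero, card_eq_zero, filter_eq_empty_iff]
  rintro p hp ⟨⟨h₁, ha⟩, h₂, hb⟩
  rw [HasAntidiagonal.mem_antidiagonal] at hp
  refine h ⟨fun i => ?_, by rw [← hp, map_add, ha, hb]⟩
  have := h₁ i
  have := h₂ i
  rw [← hp, Finsupp.add_apply]
  omega

theorem card_filter_powerset_card_add_eq {α : Type*} (s : Finset α) (m b : ℕ) :
    #{U ∈ s.powerset | #U + m = b} = if m ≤ b then (#s).choose (b - m) else 0 := by
  split_ifs with h
  · rw [← card_powersetCard, powersetCard_eq_filter]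
    congr 1
    exact filter_congr fun U _ => by omega
  · rw [card_eq_zero, filter_eq_empty_iff]
    intro U _
    omega

theorem Finsupp.sum_single_one_apply {α : Type*} [DecidableEq α] (s : Finset α) (i : α) :
    (∑ j ∈ s, Finsupp.single j 1 : α →₀ ℕ) i = if i ∈ s then 1 else 0 := by
  simp [Finsupp.finsetSum_apply, Finsupp.single_apply]

theorem Finsupp.degree_sum_single_one {α : Type*} (s : Finset α) :
    (∑ j ∈ s, Finsupp.single j 1 : α →₀ ℕ).degree = #s := by
  simp [map_sum]

section SquarefreeSplitting

variable {d : ℕ →₀ ℕ} {O T : Finset ℕ}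

theorem Finsupp.eq_sum_single_one_of_add_eq (hd : ∀ i, d i ≤ 2) (hO : ∀ i, i ∈ O ↔ d i = 1)
    (hT : ∀ i, i ∈ T ↔ d i = 2) {p q : ℕ →₀ ℕ} (h : p + q = d) (hp : ∀ i, p i ≤ 1)
    (hq : ∀ i, q i ≤ 1) : q = ∑ i ∈ {i ∈ O | q i = 1} ∪ T, Finsupp.single i 1 := by
  ext i
  have hi : p i + q i = d i := by rw [← Finsupp.add_apply, h]
  have := hd i
  have := hp i
  have := hq i
  simp only [Finsupp.sum_single_one_apply, mem_union, mem_filter, hO, hT]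
  split_ifs <;> omega

theorem Finsupp.sum_single_one_le (hO : ∀ i, i ∈ O ↔ d i = 1) (hT : ∀ i, i ∈ T ↔ d i = 2)
    {U : Finset ℕ} (hU : U ⊆ O) : ∑ i ∈ U ∪ T, Finsupp.single i 1 ≤ d := fun i => by
  by_cases hi : i ∈ U
  · simp only [Finsupp.sum_single_one_apply, mem_union, hi, true_or, if_true, (hO i).1 (hU hi),
      le_refl]
  · simp only [Finsupp.sum_single_one_apply, mem_union, hi, false_or, hT]
    split_ifs <;> omega

theorem Finsupp.tsub_sum_single_one_apply_le_one (hd : ∀ i, d i ≤ 2)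
    (hT : ∀ i, i ∈ T ↔ d i = 2) (U : Finset ℕ) (i : ℕ) :
    (d - ∑ j ∈ U ∪ T, Finsupp.single j 1 : ℕ →₀ ℕ) i ≤ 1 := by
  have := hd i
  simp only [Finsupp.tsub_apply, Finsupp.sum_single_one_apply, mem_union, hT]
  split_ifs <;> omega

end SquarefreeSplitting

open Classical in
theorem coeff_esym_mul_esym_of_le_two {a b : ℕ} {d : ℕ →₀ ℕ} (hd : ∀ i, d i ≤ 2)
    (hdeg : d.degree = a + b) :
    coeff d (esym a * esym b) =
      #{U ∈ {i ∈ d.support | d i = 1}.powerset | #U + #{i ∈ d.support | d i = 2} = b} := by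
  set O := {i ∈ d.support | d i = 1}
  set T := {i ∈ d.support | d i = 2}
  have hO (i : ℕ) : i ∈ O ↔ d i = 1 := by
    simp only [O, mem_filter, Finsupp.mem_support_iff]; omega
  have hT (i : ℕ) : i ∈ T ↔ d i = 2 := by
    simp only [T, mem_filter, Finsupp.mem_support_iff]; omega
  have hOT : Disjoint O T := disjoint_left.2 fun i hiO hiT => by
    rw [hO] at hiO; rw [hT] at hiT; omega
  rw [coeff_esym_mul_esym]
  congr 1
  refine card_nbij' (fun p => {i ∈ O | p.2 i = 1})
    (fun U => (d - ∑ i ∈ U ∪ T, Finsupp.single i 1, ∑ i ∈ U ∪ T, Finsupp.single i 1)) ?_ ?_ ?_ ?_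
  · rintro p hp
    simp only [mem_coe, mem_filter, HasAntidiagonal.mem_antidiagonal] at hp
    obtain ⟨hp, ⟨h₁, -⟩, h₂, hb⟩ := hp
    simp only [mem_coe, mem_filter, mem_powerset]
    refine ⟨filter_subset _ _, ?_⟩
    rw [← card_union_of_disjoint (hOT.mono_left (filter_subset _ _)),
      ← Finsupp.degree_sum_single_one, ← Finsupp.eq_sum_single_one_of_add_eq hd hO hT hp h₁ h₂, hb]
  · rintro U hU
    simp only [mem_coe, mem_filter, mem_powerset] at hU
    have hb : (∑ i ∈ U ∪ T, Finsupp.single i 1 : ℕ →₀ ℕ).degree = b := by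
      rw [Finsupp.degree_sum_single_one, card_union_of_disjoint (hOT.mono_left hU.1), hU.2]
    have hsum := tsub_add_cancel_of_le (Finsupp.sum_single_one_le hO hT hU.1)
    simp only [mem_coe, mem_filter, HasAntidiagonal.mem_antidiagonal]
    refine ⟨hsum, ⟨Finsupp.tsub_sum_single_one_apply_le_one hd hT U, ?_⟩, fun i => ?_, hb⟩
    · have := congrArg Finsupp.degree hsum
      rw [map_add, hb, hdeg] at this
      omega
    · rw [Finsupp.sum_single_one_apply]
      split_ifs <;> omega
  · rintro p hp
    simp only [mem_coe, mem_filter, HasAntidiagonal.mem_antidiagonal] at hp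
    obtain ⟨hp, ⟨h₁, -⟩, h₂, -⟩ := hp
    dsimp only
    rw [← Finsupp.eq_sum_single_one_of_add_eq hd hO hT hp h₁ h₂, ← hp, add_tsub_cancel_right]
  · rintro U hU
    simp only [mem_coe, mem_filter, mem_powerset] at hU
    ext i
    by_cases hi : i ∈ U
    · simp only [mem_filter, Finsupp.sum_single_one_apply, mem_union, hi, true_or, if_true,
        hU.1 hi, and_self]
    · simp only [mem_filter, Finsupp.sum_single_one_apply, mem_union, hi, false_or, hO, hT,
        iff_false]
      split_ifs <;> simp_all

instance (n : ℕ) : DecidableRel (cycle n).Adj := fun _ _ =>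
  decidable_of_iff' _ (SimpleGraph.fromRel_adj _ _ _)

section Twin

variable {V : Type} (G : SimpleGraph V) (v : V)

@[simp] theorem twin_adj_some_some {a b : V} : (twin G v).Adj (some a) (some b) ↔ G.Adj a b := by
  simp only [twin, SimpleGraph.fromRel_adj, ne_eq, Option.some.injEq, G.adj_comm b a, or_self]
  exact and_iff_right_of_imp G.ne_of_adj

@[simp] theorem twin_adj_some_none {a : V} : (twin G v).Adj (some a) none ↔ a = v ∨ G.Adj a v := by
  simp [twin]

@[simp] theorem twin_adj_none_some {b : V} : (twin G v).Adj none (some b) ↔ b = v ∨ G.Adj b v := by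
  simp [twin]

@[simp] theorem twin_adj_none_none : ¬(twin G v).Adj none none := by
  simp [twin]

instance [DecidableEq V] [DecidableRel G.Adj] : DecidableRel (twin G v).Adj
  | some _, some _ => decidable_of_iff' _ (twin_adj_some_some G v)
  | some _, none => decidable_of_iff' _ (twin_adj_some_none G v)
  | none, some _ => decidable_of_iff' _ (twin_adj_none_some G v)
  | none, none => .isFalse (twin_adj_none_none G v)

end Twin

theorem twin_cycle_four_indepSetFree : (twin (cycle 4) 3).IndepSetFree 3 := by
  unfold SimpleGraph.IndepSetFree
  decide

theorem numColorings_twin_cycle_four_of_type_221 :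
    (twin (cycle 4) 3).numColorings ![2, 2, 1] = 4 := by
  rw [SimpleGraph.numColorings, Nat.card_eq_fintype_card]
  decide

set_option maxRecDepth 100000 in
theorem numColorings_twin_cycle_four_of_type_2111 :
    (twin (cycle 4) 3).numColorings ![2, 1, 1, 1] = 18 := by
  rw [SimpleGraph.numColorings, Nat.card_eq_fintype_card]
  decide

theorem csf_twin_cycle_four_apply_eq_zero {d : ℕ →₀ ℕ}
    (h : ¬((∀ i, d i ≤ 2) ∧ d.degree = 5)) : csf (twin (cycle 4) 3) d = 0 := by
  rw [not_and_or, not_forall] at h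
  rcases h with ⟨i, hi⟩ | hdeg
  · exact csf_apply_eq_zero_of_indepSetFree twin_cycle_four_indepSetFree (by omega : 3 ≤ d i)
  · exact csf_apply_eq_zero_of_degree_ne _ (by simpa using hdeg)

theorem csf_twin_cycle_four_apply_of_le_two {d : ℕ →₀ ℕ} (hd : ∀ i, d i ≤ 2)
    (hdeg : d.degree = 5) :
    csf (twin (cycle 4) 3) d = 4 * coeff d (esym 3 * esym 2) + 6 * coeff d (esym 4 * esym 1) +
      50 * coeff d (esym 5 * esym 0) := by
  rw [coeff_esym_mul_esym_of_le_two hd hdeg, coeff_esym_mul_esym_of_le_two hd hdeg,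
    coeff_esym_mul_esym_of_le_two hd hdeg]
  simp only [card_filter_powerset_card_add_eq]
  have htype := Finsupp.degree_eq_of_le_two hd
  generalize hn₁ : #{i ∈ d.support | d i = 1} = n₁ at htype ⊢
  generalize hn₂ : #{i ∈ d.support | d i = 2} = n₂ at htype ⊢
  obtain ⟨rfl, rfl⟩ | ⟨rfl, rfl⟩ | ⟨rfl, rfl⟩ :
      (n₂ = 0 ∧ n₁ = 5) ∨ (n₂ = 1 ∧ n₁ = 3) ∨ (n₂ = 2 ∧ n₁ = 1) := by omega
  · rw [csf_apply_eq_numColorings_of_le_two _ hd (fun _ : Fin 5 => 1) (by simp)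
      (by simp [hn₁]) (by simp [hn₂]), SimpleGraph.numColorings_const_one _ (by simp)]
    norm_num [Nat.choose, Nat.factorial]
  · rw [csf_apply_eq_numColorings_of_le_two _ hd ![2, 1, 1, 1] (by decide)
      (by rw [hn₁]; decide) (by rw [hn₂]; decide), numColorings_twin_cycle_four_of_type_2111]
    norm_num [Nat.choose]
  · rw [csf_apply_eq_numColorings_of_le_two _ hd ![2, 2, 1] (by decide)
      (by rw [hn₁]; decide) (by rw [hn₂]; decide), numColorings_twin_cycle_four_of_type_221]
    norm_num [Nat.choose]

/-- Here `v_1, v_2, v_3, v_4` are the vertices `0, 1, 2, 3` of `cycle 4` and the twin `v_4'` is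
`none`. -/
theorem csf_twin_cycle_four :
    csf (twin (cycle 4) 3) =
      4 * (esym 3 * esym 2) + 6 * (esym 4 * esym 1) + 50 * esym 5 := by
  rw [← mul_one (esym 5), ← esym_zero]
  ext d
  simp only [map_add, ← map_ofNat C, coeff_C_mul]
  rw [coeff_apply]
  by_cases h : (∀ i, d i ≤ 2) ∧ d.degree = 5
  · exact csf_twin_cycle_four_apply_of_le_two h.1 h.2
  · have h' {a b : ℕ} (hab : a + b = 5) : ¬((∀ i, d i ≤ 2) ∧ d.degree = a + b) := hab ▸ h
    rw [csf_twin_cycle_four_apply_eq_zero h, coeff_esym_mul_esym_eq_zero (h' rfl),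
      coeff_esym_mul_esym_eq_zero (h' rfl), coeff_esym_mul_esym_eq_zero (h' rfl)]
    simp
end

section
/- For every integer b ≥ 1, deleting the edge v_3v_4 from H_b gives X_{H_b − {v_3v_4}} = 2 X_{T^{4,b+1}} − X_{P_{b+1}} · X_{C_4}. -/
/-!
Triple deletion (Orellana–Scott): if `xy` is an edge of `G`, a proper coloring of `G` cannot give
`z` the color of both `x` and `y`, so inclusion–exclusion on sets of colorings gives
`X_{G+xz+yz} = X_{G+xz} + X_{G+yz} - X_G`. Take `G = C_4 ⊎ P_{b+1}`, with `x = v_1` and `y = v_4'`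
adjacent on the cycle and `z = v_4` the end of the path: `G + xz + yz` is `H_b - v_3v_4`, while
`G + xz` and `G + yz` are both `T^{4,b+1}` (rotate the cycle).
-/

open scoped BigOperators

/-- The path `P_n` on the `n` vertices `0, 1, …, n-1`, with edges `{i, i+1}`. -/
def path (n : ℕ) : SimpleGraph (Fin n) :=
  SimpleGraph.fromRel (fun i j => (i : ℕ) + 1 = (j : ℕ))

/-- The tadpole graph `T^{a,b}` on `a + b` vertices: the cycle `C_a` on the vertices
`0, …, a-1` (consecutive vertices adjacent, together with the closing edge `{0, a-1}`)
and the path `P_b` on the vertices `a, …, a+b-1`, joined by the edge `{a-1, a}`.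
Here vertex `i - 1` plays the role of the vertex `v_i` of the paper. -/
def tadpole (a b : ℕ) : SimpleGraph (Fin (a + b)) :=
  SimpleGraph.fromRel (fun i j => (i : ℕ) + 1 = (j : ℕ) ∨ ((i : ℕ) = 0 ∧ (j : ℕ) = a - 1))

/-- The graph `H_b`: the twin graph `T^{4,b}_{v_4}` (where `v_4` is the cycle vertex
of degree 3, here vertex `3`, and the twin vertex `v_4'` is `none`) with the edge
`v_4' v_5` deleted. Its edges are `v_1v_2, v_2v_3, v_3v_4, v_3v_4', v_4v_1, v_4'v_1,
v_4v_4', v_4v_5` and `v_iv_{i+1}` for `5 ≤ i ≤ b+3`. -/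
def Hgraph (b : ℕ) (hb : 1 ≤ b) : SimpleGraph (Option (Fin (4 + b))) :=
  (twin (tadpole 4 b) ⟨3, by omega⟩).deleteEdges {s(none, some ⟨4, by omega⟩)}

open SimpleGraph

section ColoringSeries

variable {V W : Type} [Fintype V] [Fintype W]

noncomputable def colorExponent (κ : V → ℕ) : ℕ →₀ ℕ :=
  ∑ v, Finsupp.single (κ v) 1

lemma colorExponent_apply (κ : V → ℕ) (i : ℕ) :
    colorExponent κ i = Nat.card {v // κ v = i} := by
  classical
  simp [colorExponent, Finsupp.finsetSum_apply, Finsupp.single_apply, Fintype.card_subtype]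

lemma colorExponent_comp_equiv (e : W ≃ V) (κ : V → ℕ) :
    colorExponent (κ ∘ e) = colorExponent κ :=
  Fintype.sum_equiv e _ _ fun _ => rfl

lemma colorExponent_sumElim (κ₁ : V → ℕ) (κ₂ : W → ℕ) :
    colorExponent (Sum.elim κ₁ κ₂) = colorExponent κ₁ + colorExponent κ₂ :=
  Fintype.sum_sum_type _

lemma finite_colorExponent_preimage (d : ℕ →₀ ℕ) :
    (colorExponent ⁻¹' {d} : Set (V → ℕ)).Finite := by
  refine (Set.Finite.pi' fun _ => d.support.finite_toSet).subset fun κ hκ v => ?_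
  rw [Set.mem_preimage, Set.mem_singleton_iff] at hκ
  rw [Finset.mem_coe, ← hκ, Finsupp.mem_support_iff, colorExponent_apply]
  exact Nat.card_ne_zero.2 ⟨⟨⟨v, rfl⟩⟩, inferInstance⟩

/-- `∑_{κ ∈ S} x^κ`, where the monomial `x^κ = ∏ v, x_{κ v}` has exponent `colorExponent κ`. -/
noncomputable def coloringSeries (S : Set (V → ℕ)) : MvPowerSeries ℕ ℚ :=
  fun d => ((S ∩ colorExponent ⁻¹' {d}).ncard : ℚ)

lemma coeff_coloringSeries (S : Set (V → ℕ)) (d : ℕ →₀ ℕ) :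
    MvPowerSeries.coeff d (coloringSeries S) = ((S ∩ colorExponent ⁻¹' {d}).ncard : ℚ) :=
  rfl

lemma coloringSeries_union_add_inter (S T : Set (V → ℕ)) :
    coloringSeries (S ∪ T) + coloringSeries (S ∩ T) = coloringSeries S + coloringSeries T := by
  ext d
  simp only [map_add, coeff_coloringSeries]
  rw [Set.union_inter_distrib_right, Set.inter_inter_distrib_right]
  exact_mod_cast Set.ncard_union_add_ncard_inter _ _
    ((finite_colorExponent_preimage d).inter_of_right S)
    ((finite_colorExponent_preimage d).inter_of_right T)

lemma coloringSeries_preimage_comp_equiv (e : V ≃ W) (S : Set (V → ℕ)) :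
    coloringSeries ((· ∘ e) ⁻¹' S) = coloringSeries S := by
  ext d
  rw [coeff_coloringSeries, coeff_coloringSeries]
  have hpre : (· ∘ e) ⁻¹' S ∩ colorExponent ⁻¹' {d} =
      (· ∘ e) ⁻¹' (S ∩ colorExponent ⁻¹' {d}) := by
    ext κ
    simp [colorExponent_comp_equiv]
  rw [hpre]
  exact congrArg Nat.cast (Set.ncard_preimage_of_injective_subset_range
    (e.arrowCongr (Equiv.refl ℕ)).symm.injective
    fun κ _ => (e.arrowCongr (Equiv.refl ℕ)).symm.surjective κ)

lemma coloringSeries_sum (S : Set (V → ℕ)) (T : Set (W → ℕ)) :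
    coloringSeries {κ : V ⊕ W → ℕ | κ ∘ Sum.inl ∈ S ∧ κ ∘ Sum.inr ∈ T} =
      coloringSeries S * coloringSeries T := by
  ext d
  rw [MvPowerSeries.coeff_mul, coeff_coloringSeries]
  set E := Equiv.sumArrowEquivProdArrow V W ℕ
  set A : (ℕ →₀ ℕ) × (ℕ →₀ ℕ) → Set ((V → ℕ) × (W → ℕ)) := fun p =>
    (S ∩ colorExponent ⁻¹' {p.1}) ×ˢ (T ∩ colorExponent ⁻¹' {p.2})
  have himage : E '' ({κ | κ ∘ Sum.inl ∈ S ∧ κ ∘ Sum.inr ∈ T} ∩ colorExponent ⁻¹' {d}) =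
      ⋃ p ∈ (Finset.HasAntidiagonal.antidiagonal d : Set _), A p := by
    ext ⟨κ₁, κ₂⟩
    have hsymm : E.symm (κ₁, κ₂) = Sum.elim κ₁ κ₂ := rfl
    simp [E.image_eq_preimage_symm, hsymm, A, colorExponent_sumElim, and_assoc]
  have hdisj : (Finset.HasAntidiagonal.antidiagonal d : Set _).PairwiseDisjoint A := by
    intro p _ q _ hpq
    refine Set.disjoint_left.2 fun κ hp hq => hpq ?_
    exact Prod.ext (hp.1.2.symm.trans hq.1.2) (hp.2.2.symm.trans hq.2.2)
  have hfin (p : (ℕ →₀ ℕ) × (ℕ →₀ ℕ)) : (A p).Finite :=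
    ((finite_colorExponent_preimage p.1).inter_of_right S).prod
      ((finite_colorExponent_preimage p.2).inter_of_right T)
  rw [← Set.ncard_image_of_injective _ E.injective, himage,
    Set.Finite.ncard_biUnion (Finset.finite_toSet _) (fun p _ => hfin p) hdisj,
    finsum_mem_coe_finset]
  push_cast
  simp only [A, Set.ncard_prod, Nat.cast_mul, coeff_coloringSeries]

end ColoringSeries

section ProperColorings

variable {V W : Type}

def properColorings (G : SimpleGraph V) : Set (V → ℕ) :=
  {κ | ∀ a b, G.Adj a b → κ a ≠ κ b}

lemma properColorings_sup (G H : SimpleGraph V) :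
    properColorings (G ⊔ H) = properColorings G ∩ properColorings H := by
  ext κ
  simp only [properColorings, sup_adj, Set.mem_ofPred_eq, Set.mem_inter_iff]
  exact ⟨fun h => ⟨fun a b hab => h a b (.inl hab), fun a b hab => h a b (.inr hab)⟩,
    fun h a b => (Or.elim · (h.1 a b) (h.2 a b))⟩

lemma properColorings_edge (u v : V) :
    properColorings (edge u v) = {κ | u ≠ v → κ u ≠ κ v} := by
  ext κ
  simp only [properColorings, edge_adj, Set.mem_ofPred_eq]
  constructor
  · exact fun h huv => h u v ⟨.inl ⟨rfl, rfl⟩, huv⟩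
  · rintro h a b ⟨⟨rfl, rfl⟩ | ⟨rfl, rfl⟩, hab⟩
    exacts [h hab, (h hab.symm).symm]

lemma properColorings_sum (G : SimpleGraph V) (H : SimpleGraph W) :
    properColorings (G ⊕g H) =
      {κ | κ ∘ Sum.inl ∈ properColorings G ∧ κ ∘ Sum.inr ∈ properColorings H} := by
  ext κ
  simp only [properColorings, Set.mem_ofPred_eq, Function.comp_apply]
  refine ⟨fun h => ⟨fun a b hab => h _ _ hab, fun a b hab => h _ _ hab⟩, ?_⟩
  rintro ⟨hG, hH⟩ (a | a) (b | b) hab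
  exacts [hG a b hab, (nomatch hab), (nomatch hab), hH a b hab]

lemma SimpleGraph.Iso.properColorings_eq {G : SimpleGraph V} {H : SimpleGraph W} (e : G ≃g H) :
    properColorings H = (· ∘ e) ⁻¹' properColorings G := by
  ext κ
  simp only [properColorings, Set.mem_ofPred_eq, Set.mem_preimage, Function.comp_apply]
  refine ⟨fun h a b hab => h _ _ (e.map_adj_iff.2 hab), fun h a b hab => ?_⟩
  simpa using h (e.symm a) (e.symm b) (e.symm.map_adj_iff.2 hab)

end ProperColorings

section Csf

variable {V W : Type} [Fintype V] [Fintype W]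

lemma csf_eq_coloringSeries (G : SimpleGraph V) : csf G = coloringSeries (properColorings G) := by
  ext d
  rw [coeff_coloringSeries, ← Nat.card_coe_set_eq]
  refine congrArg Nat.cast (Nat.card_congr (Equiv.subtypeEquivRight fun κ => ?_))
  simp [properColorings, Finsupp.ext_iff, colorExponent_apply, eq_comm]

lemma SimpleGraph.Iso.csf_eq {G : SimpleGraph V} {H : SimpleGraph W} (e : G ≃g H) :
    csf G = csf H := by
  rw [csf_eq_coloringSeries, csf_eq_coloringSeries, e.properColorings_eq]
  exact (coloringSeries_preimage_comp_equiv e.toEquiv _).symm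

lemma csf_sum (G : SimpleGraph V) (H : SimpleGraph W) : csf (G ⊕g H) = csf G * csf H := by
  rw [csf_eq_coloringSeries, csf_eq_coloringSeries, csf_eq_coloringSeries, properColorings_sum,
    coloringSeries_sum]

theorem csf_sup_edge_sup_edge (G : SimpleGraph V) {x y : V} (hxy : G.Adj x y) (z : V) :
    csf (G ⊔ edge x z ⊔ edge y z) = csf (G ⊔ edge x z) + csf (G ⊔ edge y z) - csf G := by
  simp only [csf_eq_coloringSeries, properColorings_sup, properColorings_edge]
  set P := properColorings G
  have hunion : P ∩ {κ | x ≠ z → κ x ≠ κ z} ∪ P ∩ {κ | y ≠ z → κ y ≠ κ z} = P := by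
    rw [← Set.inter_union_distrib_left, Set.inter_eq_left]
    intro κ hκ
    by_contra! h
    simp only [Set.mem_union, Set.mem_ofPred_eq, not_or, Classical.not_imp, not_not] at h
    exact hκ x y hxy (h.1.2.trans h.2.2.symm)
  have hinter : P ∩ {κ | x ≠ z → κ x ≠ κ z} ∩ {κ | y ≠ z → κ y ≠ κ z} =
      P ∩ {κ | x ≠ z → κ x ≠ κ z} ∩ (P ∩ {κ | y ≠ z → κ y ≠ κ z}) := by
    ext κ
    simp only [Set.mem_inter_iff]
    tauto
  have hie := coloringSeries_union_add_inter (P ∩ {κ | x ≠ z → κ x ≠ κ z})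
    (P ∩ {κ | y ≠ z → κ y ≠ κ z})
  rw [hunion] at hie
  rw [hinter]
  exact eq_sub_of_add_eq' hie

end Csf

def SimpleGraph.Iso.supEdge {V W : Type} {G : SimpleGraph V} {G' : SimpleGraph W} (e : G ≃g G')
    (u v : V) : G ⊔ edge u v ≃g G' ⊔ edge (e u) (e v) where
  toEquiv := e.toEquiv
  map_rel_iff' := by
    intro a c
    simp only [sup_adj, edge_adj, RelIso.coe_fn_toEquiv, e.map_adj_iff, ne_eq, e.apply_eq_iff_eq]

lemma cycle_adj_iff_finRotate {n : ℕ} (i j : Fin n) :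
    (cycle n).Adj i j ↔ i ≠ j ∧ (finRotate n i = j ∨ finRotate n j = i) := by
  obtain _ | m := n
  · exact i.elim0
  simp only [cycle, fromRel_adj, finRotate_apply, Fin.ext_iff, Fin.val_add, Fin.val_one',
    Nat.add_mod_mod]

def cycleRotate (n : ℕ) : cycle n ≃g cycle n where
  toEquiv := finRotate n
  map_rel_iff' := by
    intro a c
    simp only [cycle_adj_iff_finRotate, ne_eq, EmbeddingLike.apply_eq_iff_eq]

def tadpoleIso (b : ℕ) :
    (cycle 4 ⊕g path (b + 1)) ⊔ edge (.inl 3) (.inr 0) ≃g tadpole 4 (b + 1) where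
  toEquiv := finSumFinEquiv
  map_rel_iff' := by
    rintro (i | i) (j | j) <;> have := i.isLt <;> have := j.isLt <;>
      simp only [tadpole, cycle, path, fromRel_adj, sup_adj, sum_adj, edge_adj, Fin.ext_iff,
        finSumFinEquiv_apply_left, finSumFinEquiv_apply_right, Fin.val_castAdd, Fin.val_natAdd,
        Sum.inl.injEq, Sum.inr.injEq, reduceCtorEq, ne_eq, Fin.isValue, Fin.coe_ofNat_eq_mod,
        Nat.reduceMod, Nat.zero_mod, false_and, and_false, false_or, or_false, not_false_eq_true,
        and_true] <;> omega

/-- The cycle `0 1 2 3` becomes `v_1 v_2 v_3 v_4'` and the path becomes `v_4 v_5 ⋯ v_{b+4}`. -/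
def hgraphVertexEquiv (b : ℕ) : Fin 4 ⊕ Fin (b + 1) ≃ Option (Fin (4 + b)) where
  toFun
    | .inl i => if (i : ℕ) = 3 then none else some ⟨i, by omega⟩
    | .inr j => some ⟨j + 3, by omega⟩
  invFun
    | none => .inl 3
    | some k => if h : (k : ℕ) < 3 then .inl ⟨k, by omega⟩ else .inr ⟨k - 3, by omega⟩
  left_inv := by
    rintro (i | j)
    · by_cases hi : (i : ℕ) = 3
      · simp only [hi, if_true]
        exact congrArg Sum.inl (Fin.ext hi.symm)
      · simp only [hi, if_false]
        rw [dif_pos (by omega)]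
    · simp only
      rw [dif_neg (by omega)]
      simp only [add_tsub_cancel_right, Fin.eta]
  right_inv := by
    rintro (_ | k)
    · rfl
    · by_cases hk : (k : ℕ) < 3
      · simp only [hk, ↓reduceDIte, Fin.eta, ite_eq_right_iff, reduceCtorEq, imp_false]
        omega
      · simp only [hk, dite_false]
        exact congrArg some (Fin.ext (Nat.sub_add_cancel (by omega)))

def hgraphDeleteEdgeIso (b : ℕ) (hb : 1 ≤ b) :
    (cycle 4 ⊕g path (b + 1)) ⊔ edge (.inl 0) (.inr 0) ⊔ edge (.inl 3) (.inr 0) ≃g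
      (Hgraph b hb).deleteEdges {s(some (⟨2, Nat.lt_add_right b (by norm_num)⟩ : Fin (4 + b)),
        some ⟨3, Nat.lt_add_right b (by norm_num)⟩)} where
  toEquiv := hgraphVertexEquiv b
  map_rel_iff' := by
    rintro (i | i) (j | j) <;> have := i.isLt <;> have := j.isLt <;>
      simp only [hgraphVertexEquiv, Equiv.coe_fn_mk] <;> (try split_ifs) <;>
      simp only [Hgraph, twin, tadpole, cycle, path, deleteEdges_adj, fromRel_adj, sup_adj,
        sum_adj, edge_adj, Set.mem_singleton_iff, Sym2.eq_iff, Fin.ext_iff,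
        Sum.inl.injEq, Sum.inr.injEq, reduceCtorEq, ne_eq, Fin.isValue, Fin.coe_ofNat_eq_mod,
        Nat.reduceMod, Nat.zero_mod, false_and, and_false, false_or, or_false, not_false_eq_true,
        and_true, Option.some.injEq, true_and, false_iff] <;> omega

/-- For every `b ≥ 1`, deleting the edge `v_3 v_4` from `H_b` gives
`X_{H_b − {v_3v_4}} = 2 X_{T^{4,b+1}} − X_{P_{b+1}} · X_{C_4}`. -/
theorem csf_Hgraph_deleteEdge_v3v4 (b : ℕ) (hb : 1 ≤ b) :
    csf ((Hgraph b hb).deleteEdges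
        {s(some (⟨2, by omega⟩ : Fin (4 + b)), some ⟨3, by omega⟩)}) =
      2 * csf (tadpole 4 (b + 1)) - csf (path (b + 1)) * csf (cycle 4) := by
  set G := cycle 4 ⊕g path (b + 1)
  have hadj : G.Adj (.inl 0) (.inl 3) := by
    simp [G, cycle]
  have hT : csf (G ⊔ edge (.inl 3) (.inr 0)) = csf (tadpole 4 (b + 1)) := (tadpoleIso b).csf_eq
  have hT' : csf (G ⊔ edge (.inl 0) (.inr 0)) = csf (tadpole 4 (b + 1)) :=
    hT ▸ ((Iso.sumCongr (cycleRotate 4) Iso.refl).supEdge (.inl 3) (.inr 0)).csf_eq.symm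
  rw [← (hgraphDeleteEdgeIso b hb).csf_eq, csf_sup_edge_sup_edge G hadj, hT, hT', csf_sum]
  ring
end

section
/- For all integers a ≥ 3 and b ≥ 1, X_{T^{a,b}} = (a−1) X_{P_{a+b}} − Σ_{i=2}^{a−1} X_{C_i} · X_{P_{a+b−i}}, where C_2 denotes K_2 with X_{C_2} = 2e_2. -/
open scoped BigOperators

/-! Read a coloring `κ` of `P_n` as the sequence `κ 0, …, κ (n-1)` and let `S_j`
(`pathSameColorSeries n j`) count the proper colorings of `P_n` with `κ 0 = κ j`.
The tadpole `T^{a,b}` is `P_{a+b}` plus the chord `{0, a-1}`, so `X_T = X_P - S_{a-1}`.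
Placing `C_c` on `0, …, c-1` and `P_{n-c}` after it, a coloring of `C_c ⊎ P_{n-c}` is a
coloring of `P_n` with the edge `{c-1, c}` deleted and the chord `{0, c-1}` added.
Splitting on whether `κ (c-1) = κ c`, and reversing the first `c` positions when it holds,
gives `X_{C_c} X_{P_{n-c}} = X_{P_n} - S_{c-1} + S_c`. Summed over `c = 2, …, a-1` this
telescopes, and `S_1 = 0`. -/

section ColorSeries

open Finset.HasAntidiagonal

theorem Nat.card_subtype_add_eq_sum_antidiagonal {α β M : Type*} [AddMonoid M]
    [Finset.HasAntidiagonal M] (f : α → M) (g : β → M) (d : M)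
    [∀ m, Finite {a // f a = m}] [∀ m, Finite {b // g b = m}] :
    Nat.card {x : α × β // f x.1 + g x.2 = d} =
      ∑ p ∈ antidiagonal d, Nat.card {a // f a = p.1} * Nat.card {b // g b = p.2} := by
  let e : {x : α × β // f x.1 + g x.2 = d} ≃
      Σ p : antidiagonal d, {a // f a = p.1.1} × {b // g b = p.1.2} :=
    { toFun x := ⟨⟨(f x.1.1, g x.1.2), mem_antidiagonal.2 x.2⟩, ⟨x.1.1, rfl⟩, ⟨x.1.2, rfl⟩⟩
      invFun y := ⟨(y.2.1, y.2.2), by rw [y.2.1.2, y.2.2.2]; exact mem_antidiagonal.1 y.1.2⟩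
      left_inv _ := rfl
      right_inv := by
        rintro ⟨⟨⟨p₁, p₂⟩, hp⟩, ⟨a, ha⟩, ⟨b, hb⟩⟩
        dsimp only at ha hb
        subst ha hb
        rfl }
  rw [Nat.card_congr e, Nat.card_sigma]
  simp only [Nat.card_prod]
  exact Finset.sum_coe_sort (antidiagonal d) fun p =>
    Nat.card {a // f a = p.1} * Nat.card {b // g b = p.2}

variable {V W : Type} [Fintype V] [Fintype W]

noncomputable def colorContent (κ : V → ℕ) : ℕ →₀ ℕ :=
  Multiset.toFinsupp (Finset.univ.val.map κ)

theorem colorContent_apply (κ : V → ℕ) (i : ℕ) :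
    colorContent κ i = Nat.card {v // κ v = i} := by
  classical
  simp [colorContent, Multiset.count_map, Nat.card_eq_fintype_card, Fintype.card_subtype,
    eq_comm, Finset.card_def]

theorem colorContent_sum (κ : V ⊕ W → ℕ) :
    colorContent κ = colorContent (κ ∘ Sum.inl) + colorContent (κ ∘ Sum.inr) := by
  ext i
  simp only [Finsupp.add_apply, colorContent_apply, Function.comp_apply, ← Nat.card_sum]
  exact Nat.card_congr Equiv.subtypeSum

theorem colorContent_comp_equiv (e : V ≃ W) (κ : W → ℕ) :
    colorContent (κ ∘ e) = colorContent κ := by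
  ext i
  simp only [colorContent_apply, Function.comp_apply]
  exact Nat.card_congr (e.subtypeEquiv fun _ => Iff.rfl)

instance finite_subtype_colorContent_eq (P : (V → ℕ) → Prop) (d : ℕ →₀ ℕ) :
    Finite {κ : V → ℕ // P κ ∧ colorContent κ = d} := by
  have mem_support (κ : V → ℕ) (hκ : colorContent κ = d) (v : V) : κ v ∈ d.support := by
    rw [Finsupp.mem_support_iff, ← hκ, colorContent_apply]
    exact Nat.card_ne_zero.2 ⟨⟨⟨v, rfl⟩⟩, inferInstance⟩
  refine Finite.of_injective (fun κ v => (⟨κ.1 v, mem_support κ.1 κ.2.2 v⟩ : d.support)) ?_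
  intro κ κ' h
  ext v
  exact congrArg Subtype.val (congrFun h v)

noncomputable def colorSeries (P : (V → ℕ) → Prop) : MvPowerSeries ℕ ℚ :=
  fun d => Nat.card {κ : V → ℕ // P κ ∧ colorContent κ = d}

theorem csf_eq_colorSeries (G : SimpleGraph V) :
    csf G = colorSeries (fun κ => ∀ a b, G.Adj a b → κ a ≠ κ b) := by
  ext d
  simp only [csf, colorSeries, MvPowerSeries.coeff_apply, Finsupp.ext_iff, colorContent_apply,
    eq_comm]

theorem colorSeries_congr {P Q : (V → ℕ) → Prop} (h : ∀ κ, P κ ↔ Q κ) :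
    colorSeries P = colorSeries Q :=
  congrArg colorSeries (funext fun κ => propext (h κ))

theorem colorSeries_eq_zero {P : (V → ℕ) → Prop} (h : ∀ κ, ¬ P κ) : colorSeries P = 0 := by
  funext d
  show (Nat.card _ : ℚ) = 0
  simp [h]

theorem colorSeries_eq_add (P Q : (V → ℕ) → Prop) :
    colorSeries P =
      colorSeries (fun κ => P κ ∧ Q κ) + colorSeries (fun κ => P κ ∧ ¬ Q κ) := by
  funext d
  classical
  show (Nat.card _ : ℚ) = Nat.card _ + Nat.card _
  rw [← Nat.cast_add, ← Nat.card_sum]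
  refine congrArg Nat.cast (Nat.card_congr ?_)
  let C := fun κ : V → ℕ => P κ ∧ colorContent κ = d
  refine (Equiv.sumCompl fun κ : Subtype C => Q κ.1).symm.trans (Equiv.sumCongr
    ((Equiv.subtypeSubtypeEquivSubtypeInter C Q).trans (Equiv.subtypeEquivRight fun κ => ?_))
    ((Equiv.subtypeSubtypeEquivSubtypeInter C (¬ Q ·)).trans
      (Equiv.subtypeEquivRight fun κ => ?_))) <;> tauto

theorem colorSeries_comp_equiv (e : V ≃ W) (P : (V → ℕ) → Prop) :
    colorSeries P = colorSeries (fun κ : W → ℕ => P (κ ∘ e)) := by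
  funext d
  refine congrArg Nat.cast
    (Nat.card_congr ((e.arrowCongr (Equiv.refl ℕ)).subtypeEquiv fun κ => ?_))
  simp [Equiv.arrowCongr, Function.comp_assoc, ← colorContent_comp_equiv e.symm]

theorem colorSeries_sum_mul (P : (V → ℕ) → Prop) (Q : (W → ℕ) → Prop) :
    colorSeries (fun κ : V ⊕ W → ℕ => P (κ ∘ Sum.inl) ∧ Q (κ ∘ Sum.inr)) =
      colorSeries P * colorSeries Q := by
  funext d
  let restrict :
      {κ : V ⊕ W → ℕ // P (κ ∘ Sum.inl) ∧ Q (κ ∘ Sum.inr)} ≃ Subtype P × Subtype Q :=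
    ((Equiv.sumArrowEquivProdArrow V W ℕ).subtypeEquiv fun _ => Iff.rfl).trans
      Equiv.subtypeProdEquivProd
  have regroup : {κ : V ⊕ W → ℕ // (P (κ ∘ Sum.inl) ∧ Q (κ ∘ Sum.inr)) ∧ colorContent κ = d} ≃
      {x : Subtype P × Subtype Q // colorContent x.1.1 + colorContent x.2.1 = d} :=
    (Equiv.subtypeSubtypeEquivSubtypeInter _ _).symm.trans
      (restrict.subtypeEquiv fun κ => by rw [colorContent_sum]; rfl)
  have fiber {U : Type} [Fintype U] (R : (U → ℕ) → Prop) (m : ℕ →₀ ℕ) :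
      {κ : Subtype R // colorContent κ.1 = m} ≃ {κ // R κ ∧ colorContent κ = m} :=
    Equiv.subtypeSubtypeEquivSubtypeInter R (colorContent · = m)
  have (m : ℕ →₀ ℕ) := Finite.of_equiv _ (fiber P m).symm
  have (m : ℕ →₀ ℕ) := Finite.of_equiv _ (fiber Q m).symm
  show (Nat.card _ : ℚ) = MvPowerSeries.coeff d (colorSeries P * colorSeries Q)
  have count := Nat.card_subtype_add_eq_sum_antidiagonal
    (fun κ : Subtype P => colorContent κ.1) (fun κ : Subtype Q => colorContent κ.1) d
  rw [MvPowerSeries.coeff_mul, Nat.card_congr regroup, count]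
  simp only [Nat.cast_sum, Nat.cast_mul, Nat.card_congr (fiber _ _)]
  rfl

end ColorSeries

theorem proper_fromRel_iff {V : Type} (r : V → V → Prop) (κ : V → ℕ) :
    (∀ x y, (SimpleGraph.fromRel r).Adj x y → κ x ≠ κ y) ↔
      ∀ x y, x ≠ y → r x y → κ x ≠ κ y := by
  simp only [SimpleGraph.fromRel_adj]
  refine ⟨fun h x y hne hr => h x y ⟨hne, .inl hr⟩, ?_⟩
  rintro h x y ⟨hne, hr | hr⟩
  exacts [h x y hne hr, (h y x hne.symm hr).symm]

section PathColorings

variable {n : ℕ}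

def colorAt (κ : Fin n → ℕ) (i : ℕ) : ℕ := if h : i < n then κ ⟨i, h⟩ else 0

theorem colorAt_of_lt (κ : Fin n → ℕ) {i : ℕ} (h : i < n) : colorAt κ i = κ ⟨i, h⟩ :=
  dif_pos h

@[simp] theorem colorAt_val (κ : Fin n → ℕ) (i : Fin n) : colorAt κ i = κ i := dif_pos i.2

def IsPathColoring (κ : Fin n → ℕ) : Prop := ∀ i, i + 1 < n → colorAt κ i ≠ colorAt κ (i + 1)

def IsPathColoringCutAt (c : ℕ) (κ : Fin n → ℕ) : Prop :=
  ∀ i, i + 1 < n → i + 1 ≠ c → colorAt κ i ≠ colorAt κ (i + 1)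

theorem isPathColoring_iff_cutAt {c : ℕ} (hc : 1 ≤ c) (hcn : c < n) (κ : Fin n → ℕ) :
    IsPathColoring κ ↔ IsPathColoringCutAt c κ ∧ colorAt κ (c - 1) ≠ colorAt κ c := by
  refine ⟨fun h => ⟨fun i hi _ => h i hi, ?_⟩, fun ⟨hcut, hedge⟩ i hi => ?_⟩
  · simpa only [Nat.sub_add_cancel hc] using h (c - 1) (by omega)
  · by_cases hic : i + 1 = c
    · rwa [show i = c - 1 by omega, Nat.sub_add_cancel hc]
    · exact hcut i hi hic

theorem forall_succ_ne_iff_isPathColoring (κ : Fin n → ℕ) :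
    (∀ x y : Fin n, (x : ℕ) + 1 = y → κ x ≠ κ y) ↔ IsPathColoring κ := by
  refine ⟨fun h i hi => ?_, fun h x y hxy => ?_⟩
  · rw [colorAt_of_lt κ hi, colorAt_of_lt κ (by omega)]
    exact h _ _ rfl
  · simpa [hxy] using h x (hxy ▸ y.2)

theorem proper_path_iff (κ : Fin n → ℕ) :
    (∀ x y, (path n).Adj x y → κ x ≠ κ y) ↔ IsPathColoring κ := by
  rw [path, proper_fromRel_iff, ← forall_succ_ne_iff_isPathColoring]
  exact ⟨fun h x y hxy => h x y (Fin.ne_of_val_ne (by omega)) hxy, fun h x y _ => h x y⟩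

theorem proper_tadpole_iff {a b : ℕ} (ha : 2 ≤ a) (κ : Fin (a + b) → ℕ) :
    (∀ x y, (tadpole a b).Adj x y → κ x ≠ κ y) ↔
      IsPathColoring κ ∧ colorAt κ 0 ≠ colorAt κ (a - 1) := by
  rw [tadpole, proper_fromRel_iff, ← forall_succ_ne_iff_isPathColoring,
    colorAt_of_lt κ (by omega : 0 < a + b), colorAt_of_lt κ (by omega : a - 1 < a + b)]
  refine ⟨fun h => ⟨fun x y hxy => h x y (Fin.ne_of_val_ne (by omega)) (.inl hxy),
    h _ _ (Fin.ne_of_val_ne (by simp; omega)) (.inr ⟨rfl, rfl⟩)⟩, ?_⟩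
  rintro ⟨hpath, hchord⟩ x y - (hxy | ⟨hx, hy⟩)
  · exact hpath x y hxy
  · rwa [show x = ⟨0, _⟩ from Fin.ext hx, show y = ⟨a - 1, _⟩ from Fin.ext hy]

-- `tadpole c 0` lives on `Fin (c + 0)`, which is `Fin c` by definition.
theorem cycle_eq_tadpole {c : ℕ} (hc : 2 ≤ c) : cycle c = tadpole c 0 := by
  ext x y
  have hmod (z : Fin c) : ((z : ℕ) + 1) % c = if (z : ℕ) + 1 = c then 0 else (z : ℕ) + 1 := by
    split_ifs with h
    · rw [h, Nat.mod_self]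
    · exact Nat.mod_eq_of_lt (by omega)
  simp only [cycle, tadpole, SimpleGraph.fromRel_adj, hmod, Nat.add_zero, ne_eq, Fin.ext_iff]
  split_ifs <;> omega

end PathColorings

theorem csf_path (n : ℕ) : csf (path n) = colorSeries (IsPathColoring (n := n)) :=
  (csf_eq_colorSeries _).trans (colorSeries_congr proper_path_iff)

theorem csf_tadpole {a b : ℕ} (ha : 2 ≤ a) :
    csf (tadpole a b) = colorSeries fun κ : Fin (a + b) → ℕ =>
      IsPathColoring κ ∧ colorAt κ 0 ≠ colorAt κ (a - 1) :=
  (csf_eq_colorSeries _).trans (colorSeries_congr (proper_tadpole_iff ha))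

theorem csf_cycle {c : ℕ} (hc : 2 ≤ c) :
    csf (cycle c) = colorSeries fun κ : Fin c → ℕ =>
      IsPathColoring κ ∧ colorAt κ 0 ≠ colorAt κ (c - 1) := by
  rw [cycle_eq_tadpole hc]
  exact csf_tadpole hc

noncomputable def pathSameColorSeries (n j : ℕ) : MvPowerSeries ℕ ℚ :=
  colorSeries fun κ : Fin n → ℕ => IsPathColoring κ ∧ colorAt κ 0 = colorAt κ j

theorem pathSameColorSeries_one {n : ℕ} (hn : 1 < n) : pathSameColorSeries n 1 = 0 :=
  colorSeries_eq_zero fun _ ⟨hpath, hsame⟩ => hpath 0 hn hsame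

theorem csf_cycle_mul_csf_path {c : ℕ} (hc : 2 ≤ c) (m : ℕ) :
    csf (cycle c) * csf (path m) = colorSeries fun κ : Fin (c + m) → ℕ =>
      IsPathColoringCutAt c κ ∧ colorAt κ 0 ≠ colorAt κ (c - 1) := by
  rw [csf_cycle hc, csf_path, ← colorSeries_sum_mul,
    colorSeries_comp_equiv finSumFinEquiv]
  refine colorSeries_congr fun κ => ?_
  have head {i : ℕ} (hi : i < c) :
      colorAt ((κ ∘ finSumFinEquiv) ∘ Sum.inl) i = colorAt κ i := by
    simp [colorAt, hi, show i < c + m by omega]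
  have tail (j : ℕ) : colorAt ((κ ∘ finSumFinEquiv) ∘ Sum.inr) j = colorAt κ (c + j) := by
    simp [colorAt]
  rw [head (by omega), head (by omega)]
  constructor
  · rintro ⟨⟨hhead, hchord⟩, htail⟩
    refine ⟨fun i hi hic => ?_, hchord⟩
    rcases lt_or_gt_of_ne hic with h | h
    · simpa only [head h, head (Nat.lt_of_succ_lt h)] using hhead i h
    · have := htail (i - c) (by omega)
      rwa [tail, tail, show c + (i - c) = i by omega,
        show c + (i - c + 1) = i + 1 by omega] at this
  · rintro ⟨hcut, hchord⟩
    refine ⟨⟨fun i hi => ?_, hchord⟩, fun j hj => ?_⟩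
    · rw [head hi, head (Nat.lt_of_succ_lt hi)]
      exact hcut i (by omega) (by omega)
    · rw [tail, tail, ← add_assoc]
      exact hcut (c + j) (by omega) (by omega)

def prefixRev (c i : ℕ) : ℕ := if i < c then c - 1 - i else i

theorem prefixRev_of_lt {c i : ℕ} (h : i < c) : prefixRev c i = c - 1 - i := if_pos h

theorem prefixRev_of_le {c i : ℕ} (h : c ≤ i) : prefixRev c i = i := if_neg (by omega)

theorem prefixRev_involutive (c : ℕ) : Function.Involutive (prefixRev c) := by
  intro i
  unfold prefixRev
  split_ifs <;> omega

theorem prefixRev_lt_iff {c n i : ℕ} (hc : c ≤ n) : prefixRev c i < n ↔ i < n := by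
  unfold prefixRev
  split_ifs <;> omega

def prefixRevPerm {c n : ℕ} (hc : c ≤ n) : Equiv.Perm (Fin n) :=
  Function.Involutive.toPerm (fun i => ⟨prefixRev c i, (prefixRev_lt_iff hc).2 i.2⟩)
    fun i => Fin.ext (prefixRev_involutive c i)

theorem colorAt_comp_prefixRevPerm {c n : ℕ} (hc : c ≤ n) (κ : Fin n → ℕ) (i : ℕ) :
    colorAt (κ ∘ prefixRevPerm hc) i = colorAt κ (prefixRev c i) := by
  by_cases hi : i < n
  · rw [colorAt_of_lt _ hi, colorAt_of_lt _ ((prefixRev_lt_iff hc).2 hi)]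
    rfl
  · rw [colorAt, colorAt, dif_neg hi, dif_neg (mt (prefixRev_lt_iff hc).1 hi)]

theorem pathSameColorSeries_eq_cutAt {n c : ℕ} (hc : 1 ≤ c) (hcn : c < n) :
    pathSameColorSeries n c = colorSeries fun κ : Fin n → ℕ =>
      (IsPathColoringCutAt c κ ∧ colorAt κ 0 ≠ colorAt κ (c - 1)) ∧
        colorAt κ (c - 1) = colorAt κ c := by
  rw [pathSameColorSeries, colorSeries_comp_equiv (prefixRevPerm hcn.le)]
  refine colorSeries_congr fun κ => ?_
  simp only [IsPathColoring, IsPathColoringCutAt, colorAt_comp_prefixRevPerm,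
    prefixRev_of_lt (show 0 < c by omega), prefixRev_of_le le_rfl, Nat.sub_zero]
  constructor
  · rintro ⟨hpath, hsame⟩
    refine ⟨⟨fun i hi hic => ?_, ?_⟩, hsame⟩
    · rcases lt_or_gt_of_ne hic with h | h
      · have := hpath (c - 2 - i) (by omega)
        rw [prefixRev_of_lt (by omega), prefixRev_of_lt (by omega),
          show c - 1 - (c - 2 - i) = i + 1 by omega,
          show c - 1 - (c - 2 - i + 1) = i by omega] at this
        exact this.symm
      · simpa only [prefixRev_of_le (Nat.le_of_lt_succ h), prefixRev_of_le h.le]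
          using hpath i hi
    · have := hpath (c - 1) (by omega)
      rwa [prefixRev_of_lt (by omega), Nat.sub_add_cancel hc, prefixRev_of_le le_rfl,
        Nat.sub_self, ← hsame] at this
  · rintro ⟨⟨hcut, hchord⟩, hsame⟩
    refine ⟨fun i hi => ?_, hsame⟩
    rcases lt_trichotomy (i + 1) c with h | h | h
    · rw [prefixRev_of_lt h, prefixRev_of_lt (by omega)]
      have := hcut (c - 2 - i) (by omega) (by omega)
      rw [show c - 2 - i + 1 = c - 1 - i by omega,
        show c - 2 - i = c - 1 - (i + 1) by omega] at this
      exact this.symm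
    · rw [prefixRev_of_lt (by omega), prefixRev_of_le h.ge, show c - 1 - i = 0 by omega, h,
        ← hsame]
      exact hchord
    · rw [prefixRev_of_le (by omega), prefixRev_of_le h.le]
      exact hcut i hi h.ne'

theorem colorSeries_isPathColoring_ne_eq_sub {n : ℕ} (j : ℕ) :
    colorSeries (fun κ : Fin n → ℕ => IsPathColoring κ ∧ colorAt κ 0 ≠ colorAt κ j) =
      csf (path n) - pathSameColorSeries n j := by
  rw [csf_path, pathSameColorSeries,
    colorSeries_eq_add IsPathColoring fun κ => colorAt κ 0 = colorAt κ j]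
  ring

theorem csf_tadpole_eq_sub {a b : ℕ} (ha : 2 ≤ a) :
    csf (tadpole a b) = csf (path (a + b)) - pathSameColorSeries (a + b) (a - 1) :=
  (csf_tadpole ha).trans (colorSeries_isPathColoring_ne_eq_sub _)

theorem csf_cycle_mul_csf_path_eq {n c : ℕ} (hc : 2 ≤ c) (hcn : c < n) :
    csf (cycle c) * csf (path (n - c)) =
      csf (path n) - pathSameColorSeries n (c - 1) + pathSameColorSeries n c := by
  obtain ⟨m, rfl⟩ := Nat.exists_eq_add_of_le hcn.le
  rw [Nat.add_sub_cancel_left, csf_cycle_mul_csf_path hc,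
    colorSeries_eq_add _ fun κ => colorAt κ (c - 1) = colorAt κ c,
    ← pathSameColorSeries_eq_cutAt (by omega) hcn, ← colorSeries_isPathColoring_ne_eq_sub, add_comm]
  refine congrArg (· + _) (colorSeries_congr fun κ => ?_)
  rw [isPathColoring_iff_cutAt (by omega) hcn]
  tauto

theorem sum_csf_cycle_mul_csf_path {n : ℕ} (k : ℕ) (hk : k + 1 < n) :
    ∑ i ∈ Finset.Icc 2 (k + 1), csf (cycle i) * csf (path (n - i)) =
      k * csf (path n) + pathSameColorSeries n (k + 1) := by
  induction k with
  | zero => simp [pathSameColorSeries_one hk]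
  | succ k ih =>
    rw [Finset.sum_Icc_succ_top (by omega), ih (by omega),
      csf_cycle_mul_csf_path_eq (by omega) hk]
    push_cast
    ring

theorem csf_tadpole_closed_form_general (a b : ℕ) (ha : 3 ≤ a) :
    csf (tadpole a b) =
      ((a - 1 : ℕ) : MvPowerSeries ℕ ℚ) * csf (path (a + b))
        - ∑ i ∈ Finset.Icc 2 (a - 1), csf (cycle i) * csf (path (a + b - i)) := by
  obtain ⟨k, rfl⟩ : ∃ k, a = k + 2 := ⟨a - 2, by omega⟩
  rw [csf_tadpole_eq_sub (by omega), show k + 2 - 1 = k + 1 by omega,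
    sum_csf_cycle_mul_csf_path k (by omega)]
  push_cast
  ring

/-- For all `a ≥ 3` and `b ≥ 1`,
`X_{T^{a,b}} = (a−1) X_{P_{a+b}} − ∑_{i=2}^{a−1} X_{C_i} · X_{P_{a+b−i}}`,
where `C_2 = K_2` (so that `X_{C_2} = 2 e_2`). -/
theorem csf_tadpole_closed_form (a b : ℕ) (ha : 3 ≤ a) (hb : 1 ≤ b) :
    csf (tadpole a b) =
      ((a - 1 : ℕ) : MvPowerSeries ℕ ℚ) * csf (path (a + b))
        - ∑ i ∈ Finset.Icc 2 (a - 1), csf (cycle i) * csf (path (a + b - i)) :=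
  csf_tadpole_closed_form_general a b ha
end
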